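/- The infimum of the reduced functional admits the upper bound inf_{B ∈ ℝ^{J×R}, C ∈ ℝ^{K×R}} 𝔍_red(B,C) ≤ inf { (1/2)·Σ_{i=1}^{JK} λ_i ‖V̄_i − X‖_F² : X ∈ ℝ^{J×K}, rank(X) ≤ R }. -/

import Mathlib

open Finset

lemma pad_sum {R n : ℕ} (hn : n ≤ R) (g : Fin n → ℝ) :
    (∑ r : Fin R, if h : (r : ℕ) < n then g ⟨r, h⟩ else 0) = ∑ r : Fin n, g r := by
  have h1 : (∑ r : Fin n, g r) = ∑ r : Fin n, (if h : (r : ℕ) < n then g ⟨r, h⟩ else 0) := by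
    refine Finset.sum_congr rfl fun r _ => ?_
    rw [dif_pos r.isLt]
  rw [h1, Fin.sum_univ_eq_sum_range (fun m => if h : m < n then g ⟨m, h⟩ else 0),
    Fin.sum_univ_eq_sum_range (fun m => if h : m < n then g ⟨m, h⟩ else 0)]
  refine (Finset.sum_subset (Finset.range_subset_range.mpr hn) fun m _ hm => ?_).symm
  rw [Finset.mem_range, not_lt] at hm
  rw [dif_neg (by omega)]

lemma exists_factor {J K R : ℕ} (X : Matrix (Fin J) (Fin K) ℝ) (h : X.rank ≤ R) :
    ∃ (B : Matrix (Fin J) (Fin R) ℝ) (C : Matrix (Fin K) (Fin R) ℝ),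
      ∀ j k, X j k = ∑ r, B j r * C k r := by
  set W := LinearMap.range X.mulVecLin with hW
  have hn : Module.finrank ℝ W ≤ R := h
  have colmem : ∀ k, (fun j => X j k) ∈ W := by
    intro k
    refine ⟨Pi.single k 1, ?_⟩
    ext j
    simp [Matrix.mulVecLin, Matrix.mulVec, dotProduct, Pi.single_apply, mul_ite]
  set n := Module.finrank ℝ W
  let b : Module.Basis (Fin n) ℝ W := Module.finBasis ℝ W
  refine ⟨fun j r => if h : (r : ℕ) < n then ((b ⟨r, h⟩ : W) : Fin J → ℝ) j else 0,
    fun k r => if h : (r : ℕ) < n then b.repr ⟨fun j => X j k, colmem k⟩ ⟨r, h⟩ else 0,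
    fun j k => ?_⟩
  have hsum := b.sum_repr ⟨fun j => X j k, colmem k⟩
  have h2 := congrArg (fun w : W => (w : Fin J → ℝ) j) hsum
  simp only [Submodule.coe_sum, Finset.sum_apply, SetLike.val_smul, Pi.smul_apply,
    smul_eq_mul] at h2
  calc X j k = ∑ r : Fin n, ((b r : W) : Fin J → ℝ) j * b.repr ⟨fun j => X j k, colmem k⟩ r := by
        rw [← h2]; exact Finset.sum_congr rfl fun r _ => (mul_comm _ _)
    _ = ∑ r : Fin R, (if h : (r : ℕ) < n then
          ((b ⟨r, h⟩ : W) : Fin J → ℝ) j * b.repr ⟨fun j => X j k, colmem k⟩ ⟨r, h⟩ else 0) :=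
        (pad_sum hn (fun r => ((b r : W) : Fin J → ℝ) j *
          b.repr ⟨fun j => X j k, colmem k⟩ r)).symm
    _ = _ := by
        refine Finset.sum_congr rfl fun r _ => ?_
        by_cases h : (r : ℕ) < n <;> simp [h]

lemma core_ineq {I N : ℕ} {P : Type*} [Fintype P]
    (T' : Fin I → P → ℝ) (x : P → ℝ)
    (lam : Fin N → ℝ) (v : Fin N → P → ℝ)
    (hvorth : ∀ l l', (∑ p, v l p * v l' p) = if l = l' then 1 else 0)
    (hlam : ∀ l, 0 ≤ lam l)
    (hM : ∀ p q, (∑ i, T' i p * T' i q) = ∑ l, lam l * v l p * v l q) :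
    ∑ i, ∑ p, (T' i p - ((∑ q, T' i q * x q) / (∑ q, x q ^ 2)) * x p) ^ 2
      ≤ ∑ l, lam l * ∑ p, (v l p - x p) ^ 2 := by
  set s2 : ℝ := ∑ q, x q ^ 2 with hs2
  set ip : Fin I → ℝ := fun i => ∑ q, T' i q * x q with hip
  set w : Fin N → ℝ := fun l => ∑ p, v l p * x p with hwdef
  have hs2nn : 0 ≤ s2 := Finset.sum_nonneg fun q _ => sq_nonneg _
  have htr : (∑ i, ∑ p, T' i p ^ 2) = ∑ l, lam l := by
    simp_rw [sq]
    rw [Finset.sum_comm]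
    simp_rw [hM, mul_assoc]
    rw [Finset.sum_comm]
    simp_rw [← Finset.mul_sum, hvorth]
    simp
  have hipsq : (∑ i, (ip i) ^ 2) = ∑ l, lam l * (w l) ^ 2 := by
    calc (∑ i, (ip i) ^ 2)
        = ∑ i, ∑ p, ∑ q, (T' i p * T' i q) * (x p * x q) := by
          refine Finset.sum_congr rfl fun i _ => ?_
          rw [hip, sq, Finset.sum_mul_sum]
          exact Finset.sum_congr rfl fun p _ => Finset.sum_congr rfl fun q _ => by ring
      _ = ∑ p, ∑ q, ∑ i, (T' i p * T' i q) * (x p * x q) := by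
          rw [Finset.sum_comm]
          exact Finset.sum_congr rfl fun p _ => Finset.sum_comm
      _ = ∑ p, ∑ q, ∑ l, lam l * ((v l p * x p) * (v l q * x q)) := by
          refine Finset.sum_congr rfl fun p _ => Finset.sum_congr rfl fun q _ => ?_
          rw [← Finset.sum_mul, hM p q, Finset.sum_mul]
          exact Finset.sum_congr rfl fun l _ => by ring
      _ = ∑ p, ∑ l, ∑ q, lam l * ((v l p * x p) * (v l q * x q)) :=
          Finset.sum_congr rfl fun p _ => Finset.sum_comm
      _ = ∑ l, ∑ p, ∑ q, lam l * ((v l p * x p) * (v l q * x q)) := Finset.sum_comm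
      _ = ∑ l, lam l * (w l) ^ 2 := by
          refine Finset.sum_congr rfl fun l _ => ?_
          rw [hwdef, sq, Finset.sum_mul_sum, Finset.mul_sum]
          exact Finset.sum_congr rfl fun p _ => by rw [Finset.mul_sum]
  have hw : ∀ l, (∑ p, (v l p - x p) ^ 2) = 1 - 2 * w l + s2 := by
    intro l
    have : ∀ p, (v l p - x p) ^ 2 = v l p * v l p - 2 * (v l p * x p) + x p ^ 2 := by
      intro p; ring
    simp_rw [this]
    rw [Finset.sum_add_distrib, Finset.sum_sub_distrib, ← Finset.mul_sum, hvorth l l,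
      if_pos rfl]
  by_cases hs : s2 = 0
  · have hx : ∀ p, x p = 0 := by
      intro p
      have hzero : (∑ q, x q ^ 2) = 0 := by rw [← hs2]; exact hs
      have := (Finset.sum_eq_zero_iff_of_nonneg fun q _ => sq_nonneg (x q)).mp
        hzero p (Finset.mem_univ p)
      exact (pow_eq_zero_iff (two_ne_zero)).mp this
    have hw0 : ∀ l, w l = 0 := fun l => Finset.sum_eq_zero fun p _ => by rw [hx p, mul_zero]
    have hL : (∑ i, ∑ p, (T' i p - ip i / s2 * x p) ^ 2) = ∑ i, ∑ p, T' i p ^ 2 := by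
      refine Finset.sum_congr rfl fun i _ => Finset.sum_congr rfl fun p _ => by
        rw [hx p, mul_zero, sub_zero]
    rw [hL, htr]
    refine le_of_eq ?_
    refine (Finset.sum_congr rfl fun l _ => ?_).symm
    rw [hw l, hw0 l, hs]
    ring
  · have hs' : 0 < s2 := lt_of_le_of_ne hs2nn (Ne.symm hs)
    have hL : (∑ i, ∑ p, (T' i p - ip i / s2 * x p) ^ 2)
        = (∑ l, lam l) - (∑ l, lam l * (w l) ^ 2) / s2 := by
      have e1 : ∀ i, (∑ p, (T' i p - ip i / s2 * x p) ^ 2)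
          = (∑ p, T' i p ^ 2) - (ip i) ^ 2 / s2 := by
        intro i
        have e2 : ∀ p, (T' i p - ip i / s2 * x p) ^ 2
            = T' i p ^ 2 - (2 * (ip i / s2)) * (T' i p * x p) + (ip i / s2) ^ 2 * x p ^ 2 := by
          intro p; ring
        simp_rw [e2, Finset.sum_add_distrib, Finset.sum_sub_distrib, ← Finset.mul_sum]
        rw [show (∑ q, T' i q * x q) = ip i from rfl, show (∑ q, x q ^ 2) = s2 from rfl]
        field_simp
        ring
      rw [Finset.sum_congr rfl fun i _ => e1 i, Finset.sum_sub_distrib, htr, ← Finset.sum_div,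
        hipsq]
    rw [hL]
    have hR : (∑ l, lam l * ∑ p, (v l p - x p) ^ 2) = ∑ l, lam l * (1 - 2 * w l + s2) :=
      Finset.sum_congr rfl fun l _ => by rw [hw l]
    rw [hR, ← sub_nonneg]
    have key : (∑ l, lam l * (1 - 2 * w l + s2)) - ((∑ l, lam l) - (∑ l, lam l * (w l) ^ 2) / s2)
        = ∑ l, lam l * (s2 - w l) ^ 2 / s2 := by
      rw [Finset.sum_div, ← Finset.sum_sub_distrib, ← Finset.sum_sub_distrib]
      refine Finset.sum_congr rfl fun l _ => ?_
      field_simp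
      ring
    rw [key]
    exact Finset.sum_nonneg fun l _ =>
      div_nonneg (mul_nonneg (hlam l) (sq_nonneg _)) hs2nn

/-- The CP least-squares functional. -/
noncomputable def Jfun {I J K R : ℕ} (T : Fin I → Fin J → Fin K → ℝ)
    (A : Matrix (Fin I) (Fin R) ℝ) (B : Matrix (Fin J) (Fin R) ℝ)
    (C : Matrix (Fin K) (Fin R) ℝ) : ℝ :=
  (1 / 2) * ∑ i, ∑ j, ∑ k, (T i j k - ∑ r, A i r * B j r * C k r) ^ 2

/-- The reduced functional `𝔍_red(B,C) = inf_A 𝔍(A,B,C)`. -/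
noncomputable def Jred {I J K R : ℕ} (T : Fin I → Fin J → Fin K → ℝ)
    (B : Matrix (Fin J) (Fin R) ℝ) (C : Matrix (Fin K) (Fin R) ℝ) : ℝ :=
  ⨅ A : Matrix (Fin I) (Fin R) ℝ, Jfun T A B C

/-- The matrix `M ∈ ℝ^{JK×JK}` with entries `M_{(α,β),(γ,δ)} = ∑ᵢ T_{iαβ} T_{iγδ}`. -/
noncomputable def Mmat {I J K : ℕ} (T : Fin I → Fin J → Fin K → ℝ) :
    Matrix (Fin J × Fin K) (Fin J × Fin K) ℝ :=
  Matrix.of fun p q => ∑ i, T i p.1 p.2 * T i q.1 q.2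

/-- Squared Frobenius norm. -/
noncomputable def frobSq {J K : ℕ} (X : Matrix (Fin J) (Fin K) ℝ) : ℝ :=
  ∑ j, ∑ k, (X j k) ^ 2

lemma Jfun_nonneg {I J K R : ℕ} (T : Fin I → Fin J → Fin K → ℝ)
    (A : Matrix (Fin I) (Fin R) ℝ) (B : Matrix (Fin J) (Fin R) ℝ)
    (C : Matrix (Fin K) (Fin R) ℝ) : 0 ≤ Jfun T A B C := by
  unfold Jfun
  positivity

lemma Jred_nonneg {I J K R : ℕ} (T : Fin I → Fin J → Fin K → ℝ)
    (B : Matrix (Fin J) (Fin R) ℝ) (C : Matrix (Fin K) (Fin R) ℝ) : 0 ≤ Jred T B C :=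
  Real.iInf_nonneg fun A => Jfun_nonneg T A B C

/-- Upper bound: `inf 𝔍_red ≤ inf { ½ ∑ᵢ λᵢ ‖V̄ᵢ − X‖_F² : rank X ≤ R }`. -/
theorem stmt15 (I J K R : ℕ) (hI : 0 < I) (hJ : 0 < J) (hK : 0 < K) (hR : 0 < R)
    (T : Fin I → Fin J → Fin K → ℝ)
    (lam : Fin (J * K) → ℝ) (v : Fin (J * K) → (Fin J × Fin K) → ℝ)
    (hvorth : ∀ i i', (∑ p, v i p * v i' p) = if i = i' then 1 else 0)
    (hlam : ∀ i, 0 ≤ lam i)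
    (hM : ∀ p q, Mmat T p q = ∑ i, lam i * v i p * v i q) :
    (⨅ p : Matrix (Fin J) (Fin R) ℝ × Matrix (Fin K) (Fin R) ℝ, Jred T p.1 p.2) ≤
      sInf {y : ℝ | ∃ X : Matrix (Fin J) (Fin K) ℝ, X.rank ≤ R ∧
        y = (1 / 2) * ∑ i, lam i * frobSq ((Matrix.of fun j k => v i (j, k)) - X)} := by
  refine le_csInf ⟨_, 0, by simp [Matrix.rank_zero], rfl⟩ ?_
  rintro y ⟨X, hrank, rfl⟩
  obtain ⟨B, C, hBC⟩ := exists_factor X hrank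
  have step1 : (⨅ p : Matrix (Fin J) (Fin R) ℝ × Matrix (Fin K) (Fin R) ℝ, Jred T p.1 p.2)
      ≤ Jred T B C := by
    refine ciInf_le ⟨0, ?_⟩ (B, C)
    rintro _ ⟨p, rfl⟩
    exact Jred_nonneg T p.1 p.2
  refine step1.trans ?_
  -- the chosen A
  set x : Fin J × Fin K → ℝ := fun p => X p.1 p.2 with hx
  set T' : Fin I → Fin J × Fin K → ℝ := fun i p => T i p.1 p.2 with hT'
  set A : Matrix (Fin I) (Fin R) ℝ :=
    fun i _ => (∑ q, T' i q * x q) / (∑ q, x q ^ 2) with hA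
  have step2 : Jred T B C ≤ Jfun T A B C := by
    refine ciInf_le ⟨0, ?_⟩ A
    rintro _ ⟨A', rfl⟩
    exact Jfun_nonneg T A' B C
  refine step2.trans ?_
  have hM' : ∀ p q, (∑ i, T' i p * T' i q) = ∑ l, lam l * v l p * v l q := by
    intro p q
    have := hM p q
    simpa [Mmat, hT'] using this
  have hJ : Jfun T A B C
      = (1 / 2) * ∑ i, ∑ p : Fin J × Fin K,
          (T' i p - ((∑ q, T' i q * x q) / (∑ q, x q ^ 2)) * x p) ^ 2 := by
    unfold Jfun
    congr 1
    refine Finset.sum_congr rfl fun i _ => ?_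
    rw [Fintype.sum_prod_type]
    refine Finset.sum_congr rfl fun j _ => Finset.sum_congr rfl fun k _ => ?_
    congr 1
    have : (∑ r, A i r * B j r * C k r)
        = ((∑ q, T' i q * x q) / (∑ q, x q ^ 2)) * ∑ r, B j r * C k r := by
      rw [Finset.mul_sum]
      exact Finset.sum_congr rfl fun r _ => by rw [hA]; ring
    rw [this, ← hBC j k]
  have hRHS : ∀ l, frobSq ((Matrix.of fun j k => v l (j, k)) - X)
      = ∑ p : Fin J × Fin K, (v l p - x p) ^ 2 := by
    intro l
    unfold frobSq
    rw [Fintype.sum_prod_type]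
    refine Finset.sum_congr rfl fun j _ => Finset.sum_congr rfl fun k _ => ?_
    simp [Matrix.sub_apply, hx]
  rw [hJ]
  calc (1 / 2) * ∑ i, ∑ p : Fin J × Fin K,
        (T' i p - ((∑ q, T' i q * x q) / (∑ q, x q ^ 2)) * x p) ^ 2
      ≤ (1 / 2) * ∑ l, lam l * ∑ p : Fin J × Fin K, (v l p - x p) ^ 2 := by
        refine mul_le_mul_of_nonneg_left ?_ (by norm_num)
        exact core_ineq T' x lam v hvorth hlam hM'
    _ = (1 / 2) * ∑ l, lam l * frobSq ((Matrix.of fun j k => v l (j, k)) - X) := by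
        refine congrArg _ (Finset.sum_congr rfl fun l _ => ?_)
        rw [hRHS l]
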